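/- (Soundness of the discrete-time stabilization SDP.) Let X₋, X_δ ∈ ℝ^{n×T}, U ∈ ℝ^{m×T}, Θdata ∈ ℝ^{L×T}, and Φ ∈ S^{n+T} with blocks Φ₁₁ ∈ S^n, Φ₁₂ ∈ ℝ^{n×T}, Φ₂₂ ∈ S^T. Let H ∈ ℝ^{(Ln+m)×T} stack the column-wise Khatri–Rao product Θdata ⊗_col X₋ above U, and Ψ = RΦRᵀ with R = [I_n, X_δ; 0, −H]. Let Σ_D(Φ) be the set of plants (A_1,…,A_L,B) whose discrepancy W = X_δ − [A_1,…,A_L,B] H satisfies Φ₁₁ + WΦ₁₂ᵀ + Φ₁₂Wᵀ + WΦ₂₂Wᵀ ⪰ 0. Let Ω = {ω_1,…,ω_{N_v}} ⊂ ℝ^L. Suppose there exist a symmetric positive definite P ∈ ℝ^{n×n}, and for each v matrices K_v ∈ ℝ^{m×n} and scalars α_v ≥ 0, β_v > 0, such that the symmetric (n+Ln+m)×(n+Ln+m) matrix with blocks (1,1) = P − β_v I_n, (2,2) = −(ω_v ω_vᵀ) ⊗ P, (3,2) = −ω_vᵀ ⊗ (K_v P), (3,3) = −K_v P K_vᵀ,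 remaining off-diagonal blocks zero, minus α_v Ψ, is positive semidefinite. Then for every plant (A_1,…,A_L,B) ∈ Σ_D(Φ), every θ ∈ conv(Ω), and every c ∈ ℝ^{N_v} with c_v ≥ 0, Σ_v c_v = 1, Σ_v c_v ω_v = θ, the 2n×2n block matrix [P, (A(θ) + B K(θ))P; P(A(θ) + B K(θ))ᵀ, P] is positive definite, where A(θ) = Σ_ℓ θ_ℓ A_ℓ and K(θ) = Σ_v c_v K_v. Hence the gain-scheduled controller u = K(θ)x quadratically stabilizes every consistent discrete-time LPV plant with common Lyapunov matrix P⁻¹. -/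

import Mathlib

open Matrix

/-- The data matrix `H ∈ ℝ^{(Ln+m)×T}`: the column-wise Khatri–Rao product
`Θdata ⊗_col X₋` stacked above `U`. -/
def dataH {n m L T : ℕ} (Θd : Matrix (Fin L) (Fin T) ℝ)
    (Xm : Matrix (Fin n) (Fin T) ℝ) (U : Matrix (Fin m) (Fin T) ℝ) :
    Matrix (Fin L × Fin n ⊕ Fin m) (Fin T) ℝ :=
  Matrix.of fun r t => Sum.elim (fun li => Θd li.1 t * Xm li.2 t) (fun j => U j t) r

/-- The plant matrix `Z = [A₁, …, A_L, B] ∈ ℝ^{n×(Ln+m)}`. -/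
def plantZ {n m L : ℕ} (A : Fin L → Matrix (Fin n) (Fin n) ℝ)
    (B : Matrix (Fin n) (Fin m) ℝ) : Matrix (Fin n) (Fin L × Fin n ⊕ Fin m) ℝ :=
  Matrix.of fun i r => Sum.elim (fun li => A li.1 i li.2) (fun j => B i j) r

/-- The matrix `Ψ = RΦRᵀ` with `R = [I, X_δ; 0, -H]`. -/
noncomputable def psiMat {n m L T : ℕ}
    (Xm Xδ : Matrix (Fin n) (Fin T) ℝ) (U : Matrix (Fin m) (Fin T) ℝ)
    (Θd : Matrix (Fin L) (Fin T) ℝ)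
    (Φ11 : Matrix (Fin n) (Fin n) ℝ) (Φ12 : Matrix (Fin n) (Fin T) ℝ)
    (Φ22 : Matrix (Fin T) (Fin T) ℝ) :
    Matrix (Fin n ⊕ (Fin L × Fin n ⊕ Fin m)) (Fin n ⊕ (Fin L × Fin n ⊕ Fin m)) ℝ :=
  Matrix.fromBlocks (1 : Matrix (Fin n) (Fin n) ℝ) Xδ 0 (-(dataH Θd Xm U)) * Matrix.fromBlocks Φ11 Φ12 Φ12ᵀ Φ22
    * (Matrix.fromBlocks (1 : Matrix (Fin n) (Fin n) ℝ) Xδ 0 (-(dataH Θd Xm U)))ᵀ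

/-- The `(Ln+m)×(Ln+m)` lower-right block
`[-(ωωᵀ)⊗P, (-ωᵀ⊗(KP))ᵀ; -ωᵀ⊗(KP), -KPKᵀ]` of the discrete-time vertex matrix. -/
noncomputable def discBlock {n m L : ℕ} (ω : Fin L → ℝ)
    (P : Matrix (Fin n) (Fin n) ℝ) (K : Matrix (Fin m) (Fin n) ℝ) :
    Matrix (Fin L × Fin n ⊕ Fin m) (Fin L × Fin n ⊕ Fin m) ℝ :=
  Matrix.fromBlocks
    (Matrix.of fun p q => -(ω p.1 * ω q.1 * P p.2 q.2))
    (Matrix.of (fun i q => -(ω q.1 * (K * P) i q.2)) :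
      Matrix (Fin m) (Fin L × Fin n) ℝ)ᵀ
    (Matrix.of fun i q => -(ω q.1 * (K * P) i q.2))
    (-(K * P * Kᵀ))

/-!
Congruence of the `v`-th vertex LMI with `E = [I, Z]`, `Z = [A₁, …, A_L, B]`, turns `Ψ` into
the noise quadratic form of the discrepancy `W`, which is `⪰ 0` for a consistent plant, and
turns the vertex block into `P - β I - A_v P A_vᵀ` with `A_v = A(ω_v) + B K_v`: indeed that block
is `-F P Fᵀ` for `F = [ω_v ⊗ Iₙ; K_v]`, and `Z F = A_v`. This yields `P - A_v P A_vᵀ ≻ 0`, so by a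
Schur complement `[P, A_v P; P A_vᵀ, P] ≻ 0`. That block matrix is affine in the closed-loop
matrix, and `A(θ) + B K(θ) = ∑ c_v A_v`; convexity of the positive definite cone concludes.
-/

open scoped ComplexOrder

namespace Matrix

theorem PosDef.fromBlocks₂₂_of_schur {m n 𝕜 : Type*} [Fintype m] [Fintype n] [DecidableEq n]
    [RCLike 𝕜] {A : Matrix m m 𝕜} {B : Matrix m n 𝕜} {D : Matrix n n 𝕜} (hD : D.PosDef)
    (hS : (A - B * D⁻¹ * Bᴴ).PosDef) : (fromBlocks A B Bᴴ D).PosDef := by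
  classical
  let := hD.isUnit.invertible
  refine ((PosDef.fromBlocks₂₂ A B hD).2 hS.posSemidef).posDef_iff_det_ne_zero.2 ?_
  rw [det_fromBlocks₂₂, invOf_eq_nonsing_inv]
  exact mul_ne_zero hD.det_pos.ne' hS.det_pos.ne'

theorem convex_setOf_posDef {n 𝕜 : Type*} [RCLike 𝕜] :
    Convex ℝ {M : Matrix n n 𝕜 | M.PosDef} := by
  intro M hM N hN a b ha hb hab
  rcases ha.eq_or_lt with rfl | ha
  · simpa [show b = 1 by linarith] using hN
  · exact (hM.smul ha).add_posSemidef (hN.posSemidef.smul hb)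

end Matrix

section Congruence

variable {R : Type*} [CommRing R] {n p q : Type*} [Fintype n] [DecidableEq n] [Fintype p]

theorem fromCols_one_mul_fromBlocks_one (Z : Matrix n p R) (X : Matrix n q R)
    (H : Matrix p q R) :
    fromCols (1 : Matrix n n R) Z * fromBlocks (1 : Matrix n n R) X 0 (-H)
      = fromCols (1 : Matrix n n R) (X - Z * H) := by
  rw [fromCols_mul_fromBlocks]
  simp [sub_eq_add_neg]

theorem fromCols_one_mul_fromBlocks_mul_transpose (W : Matrix n p R) (Φ₁₁ : Matrix n n R)
    (Φ₁₂ : Matrix n p R) (Φ₂₂ : Matrix p p R) :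
    fromCols (1 : Matrix n n R) W * fromBlocks Φ₁₁ Φ₁₂ Φ₁₂ᵀ Φ₂₂ * (fromCols (1 : Matrix n n R) W)ᵀ
      = Φ₁₁ + W * Φ₁₂ᵀ + Φ₁₂ * Wᵀ + W * Φ₂₂ * Wᵀ := by
  rw [fromCols_mul_fromBlocks, transpose_fromCols, fromCols_mul_fromRows]
  simp only [Matrix.one_mul, transpose_one, Matrix.mul_one, Matrix.add_mul]
  abel

theorem fromCols_one_mul_fromBlocks_neg_mul_transpose {m : Type*} [Fintype m]
    (Z : Matrix n p R) (F : Matrix p m R) (Q : Matrix n n R) (P : Matrix m m R) :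
    fromCols (1 : Matrix n n R) Z * fromBlocks Q 0 0 (-(F * P * Fᵀ))
        * (fromCols (1 : Matrix n n R) Z)ᵀ
      = Q - Z * F * P * (Z * F)ᵀ := by
  rw [fromCols_mul_fromBlocks, transpose_fromCols, fromCols_mul_fromRows, transpose_mul]
  simp [sub_eq_add_neg, Matrix.mul_assoc]

end Congruence

section RealMatrix

variable {n : Type*} [Fintype n] [DecidableEq n]

theorem posDef_fromBlocks_of_posDef_sub {P X : Matrix n n ℝ} (hP : P.PosDef)
    (hS : (P - X * P * Xᵀ).PosDef) : (fromBlocks P (X * P) (P * Xᵀ) P).PosDef := by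
  have hXP : (X * P)ᴴ = P * Xᵀ := by
    rw [conjTranspose_mul, hP.isHermitian.eq, conjTranspose_eq_transpose_of_trivial]
  have hschur : P - X * P * P⁻¹ * (X * P)ᴴ = P - X * P * Xᵀ := by
    rw [Matrix.mul_assoc X P, mul_nonsing_inv _ ((isUnit_iff_isUnit_det _).1 hP.isUnit),
      Matrix.mul_one, hXP, Matrix.mul_assoc]
  rw [← hXP]
  exact hP.fromBlocks₂₂_of_schur (hschur ▸ hS)

theorem convex_setOf_posDef_fromBlocks (P : Matrix n n ℝ) :
    Convex ℝ {X : Matrix n n ℝ | (fromBlocks P (X * P) (P * Xᵀ) P).PosDef} := by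
  intro X hX Y hY a b ha hb hab
  have h : fromBlocks P ((a • X + b • Y) * P) (P * (a • X + b • Y)ᵀ) P
      = a • fromBlocks P (X * P) (P * Xᵀ) P + b • fromBlocks P (Y * P) (P * Yᵀ) P := by
    rw [fromBlocks_smul, fromBlocks_smul, fromBlocks_add, ← add_smul, hab, one_smul]
    simp [Matrix.add_mul, Matrix.mul_add, transpose_add]
  show PosDef _
  rw [h]
  exact Matrix.convex_setOf_posDef hX hY ha hb hab

omit [Fintype n] in
theorem posDef_of_posSemidef_sub_smul_one_sub_smul {S N : Matrix n n ℝ} {α β : ℝ}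
    (h : (S - β • 1 - α • N).PosSemidef) (hN : N.PosSemidef) (hα : 0 ≤ α) (hβ : 0 < β) :
    S.PosDef := by
  simpa using PosDef.posSemidef_add (PosSemidef.add h (hN.smul hα)) (PosDef.one.smul hβ)

end RealMatrix

section VertexLMI

variable {n m L T : ℕ}

def vertexSelector (ω : Fin L → ℝ) (K : Matrix (Fin m) (Fin n) ℝ) :
    Matrix (Fin L × Fin n ⊕ Fin m) (Fin n) ℝ :=
  fromRows (of fun p j => ω p.1 * (1 : Matrix (Fin n) (Fin n) ℝ) p.2 j) K

theorem discBlock_eq_neg_vertexSelector (ω : Fin L → ℝ) {P : Matrix (Fin n) (Fin n) ℝ}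
    (hP : P.IsSymm) (K : Matrix (Fin m) (Fin n) ℝ) :
    discBlock ω P K = -(vertexSelector ω K * P * (vertexSelector ω K)ᵀ) := by
  rw [vertexSelector, transpose_fromRows, fromRows_mul, fromRows_mul_fromCols]
  ext (⟨ℓ, i⟩ | i) (⟨k, j⟩ | j) <;>
    simp [discBlock, mul_apply, one_apply, Finset.sum_mul, Finset.mul_sum]
  · ring
  · exact Finset.sum_congr rfl fun x _ => by rw [hP.apply x i]; ring
  · exact Finset.sum_congr rfl fun x _ => by ring

theorem plantZ_mul_vertexSelector (A : Fin L → Matrix (Fin n) (Fin n) ℝ)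
    (B : Matrix (Fin n) (Fin m) ℝ) (ω : Fin L → ℝ) (K : Matrix (Fin m) (Fin n) ℝ) :
    plantZ A B * vertexSelector ω K = (∑ ℓ, ω ℓ • A ℓ) + B * K := by
  ext i j
  simp [plantZ, vertexSelector, mul_apply, one_apply, Matrix.sum_apply, Fintype.sum_prod_type,
    mul_comm]

theorem fromCols_one_mul_psiMat_mul_transpose (Xm Xδ : Matrix (Fin n) (Fin T) ℝ)
    (U : Matrix (Fin m) (Fin T) ℝ) (Θd : Matrix (Fin L) (Fin T) ℝ)
    (Φ11 : Matrix (Fin n) (Fin n) ℝ) (Φ12 : Matrix (Fin n) (Fin T) ℝ)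
    (Φ22 : Matrix (Fin T) (Fin T) ℝ) (Z : Matrix (Fin n) (Fin L × Fin n ⊕ Fin m) ℝ) :
    fromCols (1 : Matrix (Fin n) (Fin n) ℝ) Z * psiMat Xm Xδ U Θd Φ11 Φ12 Φ22
        * (fromCols (1 : Matrix (Fin n) (Fin n) ℝ) Z)ᵀ
      = Φ11 + (Xδ - Z * dataH Θd Xm U) * Φ12ᵀ + Φ12 * (Xδ - Z * dataH Θd Xm U)ᵀ
        + (Xδ - Z * dataH Θd Xm U) * Φ22 * (Xδ - Z * dataH Θd Xm U)ᵀ := by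
  rw [psiMat, ← fromCols_one_mul_fromBlocks_mul_transpose,
    ← fromCols_one_mul_fromBlocks_one Z Xδ (dataH Θd Xm U), transpose_mul]
  simp only [Matrix.mul_assoc]

theorem posDef_sub_closedLoop_of_vertexLMI {Xm Xδ : Matrix (Fin n) (Fin T) ℝ}
    {U : Matrix (Fin m) (Fin T) ℝ} {Θd : Matrix (Fin L) (Fin T) ℝ}
    {Φ11 : Matrix (Fin n) (Fin n) ℝ} {Φ12 : Matrix (Fin n) (Fin T) ℝ}
    {Φ22 : Matrix (Fin T) (Fin T) ℝ} {A : Fin L → Matrix (Fin n) (Fin n) ℝ}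
    {B : Matrix (Fin n) (Fin m) ℝ} {ω : Fin L → ℝ} {P : Matrix (Fin n) (Fin n) ℝ}
    {K : Matrix (Fin m) (Fin n) ℝ} {α β : ℝ} (hP : P.PosDef) (hα : 0 ≤ α) (hβ : 0 < β)
    (hLMI : (fromBlocks (P - β • (1 : Matrix (Fin n) (Fin n) ℝ)) 0 0 (discBlock ω P K)
        - α • psiMat Xm Xδ U Θd Φ11 Φ12 Φ22).PosSemidef)
    (hW : (Φ11 + (Xδ - plantZ A B * dataH Θd Xm U) * Φ12ᵀ
        + Φ12 * (Xδ - plantZ A B * dataH Θd Xm U)ᵀ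
        + (Xδ - plantZ A B * dataH Θd Xm U) * Φ22
          * (Xδ - plantZ A B * dataH Θd Xm U)ᵀ).PosSemidef) :
    (P - ((∑ ℓ, ω ℓ • A ℓ) + B * K) * P * ((∑ ℓ, ω ℓ • A ℓ) + B * K)ᵀ).PosDef := by
  have h :=
    hLMI.mul_mul_conjTranspose_same (fromCols (1 : Matrix (Fin n) (Fin n) ℝ) (plantZ A B))
  rw [conjTranspose_eq_transpose_of_trivial, Matrix.mul_sub, Matrix.sub_mul, Matrix.mul_smul,
    Matrix.smul_mul, fromCols_one_mul_psiMat_mul_transpose,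
    discBlock_eq_neg_vertexSelector ω (isHermitian_iff_isSymm.1 hP.isHermitian),
    fromCols_one_mul_fromBlocks_neg_mul_transpose, plantZ_mul_vertexSelector,
    sub_right_comm P] at h
  exact posDef_of_posSemidef_sub_smul_one_sub_smul h hW hα hβ

end VertexLMI

theorem stmt16_general {n m L T Nv : ℕ}
    (Xm Xδ : Matrix (Fin n) (Fin T) ℝ) (U : Matrix (Fin m) (Fin T) ℝ)
    (Θd : Matrix (Fin L) (Fin T) ℝ)
    (Φ11 : Matrix (Fin n) (Fin n) ℝ) (Φ12 : Matrix (Fin n) (Fin T) ℝ)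
    (Φ22 : Matrix (Fin T) (Fin T) ℝ)
    (ω : Fin Nv → (Fin L → ℝ))
    (P : Matrix (Fin n) (Fin n) ℝ) (hP : P.PosDef)
    (K : Fin Nv → Matrix (Fin m) (Fin n) ℝ)
    (α β : Fin Nv → ℝ) (hα : ∀ v, 0 ≤ α v) (hβ : ∀ v, 0 < β v)
    (hLMI : ∀ v : Fin Nv,
      (Matrix.fromBlocks (P - β v • (1 : Matrix (Fin n) (Fin n) ℝ)) 0 0
          (discBlock (ω v) P (K v))
        - α v • psiMat Xm Xδ U Θd Φ11 Φ12 Φ22).PosSemidef) :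
    ∀ (A : Fin L → Matrix (Fin n) (Fin n) ℝ) (B : Matrix (Fin n) (Fin m) ℝ),
      (Φ11 + (Xδ - plantZ A B * dataH Θd Xm U) * Φ12ᵀ
          + Φ12 * (Xδ - plantZ A B * dataH Θd Xm U)ᵀ
          + (Xδ - plantZ A B * dataH Θd Xm U) * Φ22
            * (Xδ - plantZ A B * dataH Θd Xm U)ᵀ).PosSemidef →
      ∀ θ ∈ convexHull ℝ (Set.range ω), ∀ c : Fin Nv → ℝ,
        (∀ v, 0 ≤ c v) → (∑ v, c v) = 1 → (∑ v, c v • ω v) = θ →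
        (Matrix.fromBlocks P
            (((∑ ℓ, θ ℓ • A ℓ) + B * (∑ v, c v • K v)) * P)
            (P * ((∑ ℓ, θ ℓ • A ℓ) + B * (∑ v, c v • K v))ᵀ)
            P).PosDef := by
  rintro A B hW _ - c hc hc1 rfl
  have hvertex : ∀ v, (∑ ℓ, ω v ℓ • A ℓ) + B * K v
      ∈ {X | (fromBlocks P (X * P) (P * Xᵀ) P).PosDef} := fun v =>
    posDef_fromBlocks_of_posDef_sub hP
      (posDef_sub_closedLoop_of_vertexLMI hP (hα v) (hβ v) (hLMI v) hW)
  have hinterp : (∑ ℓ, (∑ v, c v • ω v) ℓ • A ℓ) + B * ∑ v, c v • K v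
      = ∑ v, c v • ((∑ ℓ, ω v ℓ • A ℓ) + B * K v) := by
    simp only [Finset.sum_apply, Pi.smul_apply, smul_eq_mul, Finset.sum_smul, smul_smul,
      Matrix.mul_sum, Matrix.mul_smul, smul_add, Finset.sum_add_distrib, Finset.smul_sum]
    rw [Finset.sum_comm]
  rw [hinterp]
  exact (convex_setOf_posDef_fromBlocks P).sum_mem (fun v _ => hc v) hc1 fun v _ => hvertex v

/-- soundness of the discrete-time stabilization SDP, Eq. (32) of
the paper. If the vertex LMIs
`[P - β_v I, *, *; 0, -(ω_vω_vᵀ)⊗P, *; 0, -ω_vᵀ⊗(K_vP), -K_vPK_vᵀ] - α_v Ψ ⪰ 0`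
are feasible with `P ≻ 0`, `α_v ≥ 0`, `β_v > 0`, then the gain-scheduled controller
built from the `K_v` quadratically stabilizes every consistent discrete-time LPV
plant: `[P, (A(θ)+BK(θ))P; P(A(θ)+BK(θ))ᵀ, P] ≻ 0` for all plants in `Σ_D(Φ)`, all
`θ ∈ conv(Ω)`, and all interpolating coefficients `c`. -/
theorem stmt16 {n m L T Nv : ℕ}
    (Xm Xδ : Matrix (Fin n) (Fin T) ℝ) (U : Matrix (Fin m) (Fin T) ℝ)
    (Θd : Matrix (Fin L) (Fin T) ℝ)
    (Φ11 : Matrix (Fin n) (Fin n) ℝ) (Φ12 : Matrix (Fin n) (Fin T) ℝ)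
    (Φ22 : Matrix (Fin T) (Fin T) ℝ) (h11 : Φ11.IsSymm) (h22 : Φ22.IsSymm)
    (ω : Fin Nv → (Fin L → ℝ))
    (P : Matrix (Fin n) (Fin n) ℝ) (hPs : P.IsSymm) (hP : P.PosDef)
    (K : Fin Nv → Matrix (Fin m) (Fin n) ℝ)
    (α β : Fin Nv → ℝ) (hα : ∀ v, 0 ≤ α v) (hβ : ∀ v, 0 < β v)
    (hLMI : ∀ v : Fin Nv,
      (Matrix.fromBlocks (P - β v • (1 : Matrix (Fin n) (Fin n) ℝ)) 0 0
          (discBlock (ω v) P (K v))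
        - α v • psiMat Xm Xδ U Θd Φ11 Φ12 Φ22).PosSemidef) :
    ∀ (A : Fin L → Matrix (Fin n) (Fin n) ℝ) (B : Matrix (Fin n) (Fin m) ℝ),
      (Φ11 + (Xδ - plantZ A B * dataH Θd Xm U) * Φ12ᵀ
          + Φ12 * (Xδ - plantZ A B * dataH Θd Xm U)ᵀ
          + (Xδ - plantZ A B * dataH Θd Xm U) * Φ22
            * (Xδ - plantZ A B * dataH Θd Xm U)ᵀ).PosSemidef →
      ∀ θ ∈ convexHull ℝ (Set.range ω), ∀ c : Fin Nv → ℝ,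
        (∀ v, 0 ≤ c v) → (∑ v, c v) = 1 → (∑ v, c v • ω v) = θ →
        (Matrix.fromBlocks P
            (((∑ ℓ, θ ℓ • A ℓ) + B * (∑ v, c v • K v)) * P)
            (P * ((∑ ℓ, θ ℓ • A ℓ) + B * (∑ v, c v • K v))ᵀ)
            P).PosDef :=
  stmt16_general Xm Xδ U Θd Φ11 Φ12 Φ22 ω P hP K α β hα hβ hLMI
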